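/- Let G be a finite simple graph, s a vertex of G, and h ≥ 1, p ≥ 1 integers. Let C be a 2-edge-connected subgraph of G whose hop-diameter (within C) is at most h. If some vertex of C belongs to B'(s,hp), then every vertex and every edge of C belongs to B'(s,h(p+1)). -/

import Mathlib

/-!
Take a 2-edge-connected witness `H` of `B'(s, h·p)` through the common vertex `v`. The union
`H ⊔ C` is again 2-edge-connected, since deleting an edge leaves both pieces connected and they
still share `v`. Every vertex of `C` is within `h` hops of `v`, hence within `h·p + h` hops of
`s`, so `H ⊔ C` is one of the subgraphs whose supremum defines `B'(s, h·(p+1))`.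
-/

/-- The hop-ball of radius `ℓ` around `u`: vertices joined to `u` by a walk of
hop-length at most `ℓ`. -/
def hopBall {V : Type*} (G : SimpleGraph V) (u : V) (ℓ : ℕ) : Set V :=
  {v | ∃ p : G.Walk u v, p.length ≤ ℓ}

/-- A subgraph is 2-edge-connected if it is connected and remains connected after
deleting any single edge. -/
def Subgraph.TwoEdgeConnected {V : Type*} {G : SimpleGraph V} (H : G.Subgraph) : Prop :=
  H.Connected ∧ ∀ e ∈ H.edgeSet, (H.deleteEdges {e}).Connected

/-- `B'(u, ℓ)`: the maximal 2-edge-connected subgraph of `G[B(u, ℓ)]` containing `u`,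
i.e. the union of all 2-edge-connected subgraphs of the ball-induced subgraph that
contain `u`. -/
noncomputable def maxTwoEdgeConnBall {V : Type*} (G : SimpleGraph V) (u : V) (ℓ : ℕ) :
    G.Subgraph :=
  sSup {H : G.Subgraph | H.verts ⊆ hopBall G u ℓ ∧ u ∈ H.verts ∧ Subgraph.TwoEdgeConnected H}

section

open SimpleGraph

variable {V : Type*} {G : SimpleGraph V}

lemma SimpleGraph.Subgraph.deleteEdges_sup (H K : G.Subgraph) (s : Set (Sym2 V)) :
    (H ⊔ K).deleteEdges s = H.deleteEdges s ⊔ K.deleteEdges s := by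
  ext <;> simp [or_and_right]

namespace Subgraph.TwoEdgeConnected

lemma connected_deleteEdges_singleton {H : G.Subgraph} (hH : Subgraph.TwoEdgeConnected H)
    (e : Sym2 V) : (H.deleteEdges {e}).Connected := by
  by_cases he : e ∈ H.edgeSet
  · exact hH.2 e he
  · have hempty : H.edgeSet ∩ {e} = ∅ := by simpa using he
    rw [← Subgraph.deleteEdges_inter_edgeSet_left_eq, hempty, Subgraph.deleteEdges_empty_eq]
    exact hH.1

lemma sup {H K : G.Subgraph} (hH : Subgraph.TwoEdgeConnected H)
    (hK : Subgraph.TwoEdgeConnected K) (hHK : (H ⊓ K).verts.Nonempty) :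
    Subgraph.TwoEdgeConnected (H ⊔ K) := by
  refine ⟨Subgraph.connected_sup hH.1.preconnected hK.1.preconnected hHK, fun e _ => ?_⟩
  rw [Subgraph.deleteEdges_sup]
  exact Subgraph.connected_sup (hH.connected_deleteEdges_singleton e).preconnected
    (hK.connected_deleteEdges_singleton e).preconnected hHK

end Subgraph.TwoEdgeConnected

lemma hopBall_mono {u : V} {ℓ ℓ' : ℕ} (hℓ : ℓ ≤ ℓ') : hopBall G u ℓ ⊆ hopBall G u ℓ' :=
  fun _ ⟨q, hq⟩ => ⟨q, hq.trans hℓ⟩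

lemma mem_hopBall_add {u v w : V} {ℓ k : ℕ} (hv : v ∈ hopBall G u ℓ) (q : G.Walk v w)
    (hq : q.length ≤ k) : w ∈ hopBall G u (ℓ + k) := by
  obtain ⟨r, hr⟩ := hv
  exact ⟨r.append q, by rw [Walk.length_append]; omega⟩

lemma le_maxTwoEdgeConnBall {u : V} {ℓ : ℕ} {H : G.Subgraph} (hball : H.verts ⊆ hopBall G u ℓ)
    (hu : u ∈ H.verts) (hH : Subgraph.TwoEdgeConnected H) : H ≤ maxTwoEdgeConnBall G u ℓ :=
  le_sSup ⟨hball, hu, hH⟩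

lemma exists_of_mem_maxTwoEdgeConnBall_verts {u v : V} {ℓ : ℕ}
    (hv : v ∈ (maxTwoEdgeConnBall G u ℓ).verts) :
    ∃ H : G.Subgraph, H.verts ⊆ hopBall G u ℓ ∧ u ∈ H.verts ∧ Subgraph.TwoEdgeConnected H ∧
      v ∈ H.verts := by
  rw [maxTwoEdgeConnBall, Subgraph.verts_sSup, Set.mem_iUnion₂] at hv
  obtain ⟨H, ⟨hball, hu, hH⟩, hvH⟩ := hv
  exact ⟨H, hball, hu, hH, hvH⟩

end

theorem twoEdgeConn_captured_by_larger_ball_general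
    {V : Type*} (G : SimpleGraph V)
    (s : V) (h p : ℕ)
    (C : G.Subgraph) (hC : Subgraph.TwoEdgeConnected C)
    (hdiam : ∀ a ∈ C.verts, ∀ b ∈ C.verts,
      ∃ q : C.spanningCoe.Walk a b, q.length ≤ h)
    (hmeet : ∃ v ∈ C.verts, v ∈ (maxTwoEdgeConnBall G s (h * p)).verts) :
    C.verts ⊆ (maxTwoEdgeConnBall G s (h * (p + 1))).verts ∧
    C.edgeSet ⊆ (maxTwoEdgeConnBall G s (h * (p + 1))).edgeSet := by
  obtain ⟨v, hvC, hvB⟩ := hmeet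
  obtain ⟨H, hHball, hsH, hH, hvH⟩ := exists_of_mem_maxTwoEdgeConnBall_verts hvB
  have hCball : C.verts ⊆ hopBall G s (h * (p + 1)) := fun x hx => by
    obtain ⟨q, hq⟩ := hdiam v hvC x hx
    rw [Nat.mul_succ]
    exact mem_hopBall_add (hHball hvH) (q.mapLe C.spanningCoe_le)
      (by rwa [SimpleGraph.Walk.length_mapLe])
  have hHball' : H.verts ⊆ hopBall G s (h * (p + 1)) :=
    hHball.trans (hopBall_mono (Nat.mul_le_mul_left h p.le_succ))
  have hle : C ≤ maxTwoEdgeConnBall G s (h * (p + 1)) :=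
    le_sup_right.trans <| le_maxTwoEdgeConnBall (Set.union_subset hHball' hCball) (Or.inl hsH)
      (hH.sup hC ⟨v, hvH, hvC⟩)
  exact ⟨hle.1, SimpleGraph.Subgraph.edgeSet_mono hle⟩

/-- Let `C` be a 2-edge-connected subgraph of `G` whose hop-diameter
(within `C`) is at most `h`.  If some vertex of `C` belongs to `B'(s, h·p)`, then every
vertex and every edge of `C` belongs to `B'(s, h·(p+1))`. -/
theorem twoEdgeConn_captured_by_larger_ball
    {V : Type*} [Fintype V] [DecidableEq V] (G : SimpleGraph V)
    (s : V) (h p : ℕ) (hh : 1 ≤ h) (hp : 1 ≤ p)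
    (C : G.Subgraph) (hC : Subgraph.TwoEdgeConnected C)
    (hdiam : ∀ a ∈ C.verts, ∀ b ∈ C.verts,
      ∃ q : C.spanningCoe.Walk a b, q.length ≤ h)
    (hmeet : ∃ v ∈ C.verts, v ∈ (maxTwoEdgeConnBall G s (h * p)).verts) :
    C.verts ⊆ (maxTwoEdgeConnBall G s (h * (p + 1))).verts ∧
    C.edgeSet ⊆ (maxTwoEdgeConnBall G s (h * (p + 1))).edgeSet :=
  twoEdgeConn_captured_by_larger_ball_general G s h p C hC hdiam hmeet
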